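/- For every β > 0 and J > 0, the thermodynamic limit of the Curie–Weiss pressure exists and is given by the variational formula lim_{N→∞} (1/N) ln Z_N(β) = sup_{m̃ ∈ [-1,1]} { ln 2 + ln cosh(βJ m̃) − (βJ/2) m̃² }. -/

import Mathlib

open Real Filter

/-- The value of a spin: `true ↦ 1`, `false ↦ -1`. -/
noncomputable def spin (b : Bool) : ℝ := if b then 1 else -1

/-- The magnetization per spin of a configuration `σ ∈ {-1,1}^N`. -/
noncomputable def mag (N : ℕ) (σ : Fin N → Bool) : ℝ := (1 / (N : ℝ)) * ∑ i, spin (σ i)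

/-- The Curie–Weiss partition function `Z_N(β) = ∑_σ exp((βJN/2) m(σ)²)`. -/
noncomputable def Zcw (N : ℕ) (J β : ℝ) : ℝ :=
  ∑ σ : Fin N → Bool, Real.exp (β * J * (N : ℝ) / 2 * (mag N σ) ^ 2)

/-! Completing the square linearises the exponent: `m² / 2 = max_t (t m - t² / 2)`,
attained at `t = m`. For fixed `t` the linearised weight `exp (βJN (t m - t² / 2))` factorises
over the spins and sums to `exp (N φ(t))`, where `φ = mfPressure (βJ)`. Keeping a single
`t ∈ [-1, 1]` gives `Z_N ≥ exp (N φ(t))`. Conversely `m(σ)` takes at most `N + 1` values, all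
in `[-1, 1]`, and taking `t = m(σ)` termwise gives `Z_N ≤ (N + 1) exp (N sup φ)`; the factor
`N + 1` is lost under `(1 / N) log`. -/

open Finset

lemma mul_mag (N : ℕ) (σ : Fin N → Bool) : (N : ℝ) * mag N σ = ∑ i, spin (σ i) := by
  rcases Nat.eq_zero_or_pos N with rfl | hN
  · simp
  · rw [mag, ← mul_assoc, mul_one_div_cancel (by positivity), one_mul]

lemma sum_spin_eq_two_mul_card_sub (N : ℕ) (σ : Fin N → Bool) :
    ∑ i, spin (σ i) = 2 * (#{i | σ i} : ℝ) - N := by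
  have h : ∀ i, spin (σ i) = 2 * (if σ i then (1 : ℝ) else 0) - 1 := by
    intro i; cases σ i <;> norm_num [spin]
  simp_rw [h, sum_sub_distrib, ← mul_sum, sum_boole, sum_const, card_univ, Fintype.card_fin,
    nsmul_eq_mul, mul_one]

lemma abs_mag_le_one (N : ℕ) (σ : Fin N → Bool) : |mag N σ| ≤ 1 := by
  rcases Nat.eq_zero_or_pos N with rfl | hN
  · simp [mag]
  have hN' : (0 : ℝ) < N := by exact_mod_cast hN
  rw [← mul_le_mul_iff_of_pos_left hN', mul_one, ← abs_of_pos hN', ← abs_mul, abs_of_pos hN',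
    mul_mag]
  calc |∑ i, spin (σ i)| ≤ ∑ i : Fin N, |spin (σ i)| := abs_sum_le_sum_abs _ _
    _ = N := by simp [spin, apply_ite]

lemma card_image_mag_le (N : ℕ) : #(univ.image (mag N)) ≤ N + 1 := by
  have hsub : univ.image (mag N) ⊆
      (range (N + 1)).image fun k : ℕ => 1 / (N : ℝ) * (2 * k - N) := by
    intro m hm
    obtain ⟨σ, -, rfl⟩ := mem_image.mp hm
    refine mem_image.mpr ⟨#{i | σ i}, ?_, by rw [mag, sum_spin_eq_two_mul_card_sub]⟩
    exact mem_range_succ_iff.mpr ((card_filter_le _ _).trans (by simp))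
  exact (card_le_card hsub).trans (card_image_le.trans (card_range _).le)

lemma sum_exp_mul_sum_spin (N : ℕ) (h : ℝ) :
    ∑ σ : Fin N → Bool, exp (h * ∑ i, spin (σ i)) = (2 * cosh h) ^ N := by
  have hspin : ∑ b : Bool, exp (h * spin b) = 2 * cosh h := by
    simp [spin, cosh_eq]; ring
  simp_rw [mul_sum, exp_sum, ← Fintype.prod_sum fun (_ : Fin N) (b : Bool) => exp (h * spin b),
    hspin, prod_const, card_univ, Fintype.card_fin]

noncomputable def mfPressure (a t : ℝ) : ℝ := log 2 + log (cosh (a * t)) - a / 2 * t ^ 2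

lemma continuous_mfPressure (a : ℝ) : Continuous (mfPressure a) := by
  unfold mfPressure
  fun_prop (disch := exact fun t => (cosh_pos _).ne')

lemma bddAbove_mfPressure_image_Icc (a : ℝ) : BddAbove (mfPressure a '' Set.Icc (-1) 1) :=
  (isCompact_Icc.image (continuous_mfPressure a)).bddAbove

lemma sum_exp_linearised (a t : ℝ) (N : ℕ) :
    ∑ σ : Fin N → Bool, exp (a * N * (t * mag N σ - t ^ 2 / 2)) =
      exp (N * mfPressure a t) := by
  have hlin : ∀ σ : Fin N → Bool,
      a * N * (t * mag N σ - t ^ 2 / 2) = a * t * ∑ i, spin (σ i) - a * N * t ^ 2 / 2 := by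
    intro σ; rw [← mul_mag]; ring
  simp_rw [hlin, exp_sub, ← sum_div, sum_exp_mul_sum_spin]
  rw [← exp_log (by positivity : (0 : ℝ) < 2 * cosh (a * t)), ← exp_nat_mul, ← exp_sub,
    log_mul two_ne_zero (cosh_pos _).ne', mfPressure]
  ring_nf

lemma linearised_le_quadratic {a : ℝ} (ha : 0 ≤ a) (N : ℕ) (t m : ℝ) :
    a * N * (t * m - t ^ 2 / 2) ≤ a * N / 2 * m ^ 2 := by
  have : 0 ≤ a * N * (m - t) ^ 2 := by positivity
  linarith

lemma exp_mul_mfPressure_le_Zcw {J β : ℝ} (hβJ : 0 ≤ β * J) (N : ℕ) (t : ℝ) :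
    exp (N * mfPressure (β * J) t) ≤ Zcw N J β := by
  rw [← sum_exp_linearised]
  exact sum_le_sum fun σ _ => exp_le_exp.mpr (linearised_le_quadratic hβJ N t _)

lemma Zcw_le_sum_image_mag (N : ℕ) (J β : ℝ) :
    Zcw N J β ≤ ∑ t ∈ univ.image (mag N), exp (N * mfPressure (β * J) t) := by
  simp_rw [← sum_exp_linearised, Zcw]
  rw [sum_comm]
  refine sum_le_sum fun σ _ => ?_
  calc exp (β * J * N / 2 * mag N σ ^ 2)
      = exp (β * J * N * (mag N σ * mag N σ - mag N σ ^ 2 / 2)) := by ring_nf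
    _ ≤ _ := single_le_sum (f := fun t => exp (β * J * N * (t * mag N σ - t ^ 2 / 2)))
        (fun _ _ => (exp_pos _).le) (mem_image_of_mem _ (mem_univ σ))

lemma sSup_mfPressure_le_log_Zcw_div {J β : ℝ} (hβJ : 0 ≤ β * J) {N : ℕ} (hN : 0 < N) :
    sSup (mfPressure (β * J) '' Set.Icc (-1) 1) ≤ log (Zcw N J β) / N := by
  have hN' : (0 : ℝ) < N := by exact_mod_cast hN
  refine csSup_le ((Set.nonempty_Icc.mpr (by norm_num)).image _) ?_
  rintro _ ⟨t, -, rfl⟩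
  rw [le_div_iff₀ hN', mul_comm, ← log_exp (N * _)]
  exact log_le_log (exp_pos _) (exp_mul_mfPressure_le_Zcw hβJ N t)

lemma Zcw_le_add_one_mul_exp_sSup (N : ℕ) (J β : ℝ) :
    Zcw N J β ≤ (N + 1) * exp (N * sSup (mfPressure (β * J) '' Set.Icc (-1) 1)) :=
  calc Zcw N J β ≤ ∑ t ∈ univ.image (mag N), exp (N * mfPressure (β * J) t) :=
        Zcw_le_sum_image_mag N J β
    _ ≤ ∑ t ∈ univ.image (mag N), exp (N * sSup (mfPressure (β * J) '' Set.Icc (-1) 1)) := by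
        refine sum_le_sum fun t ht => exp_le_exp.mpr (mul_le_mul_of_nonneg_left ?_ N.cast_nonneg)
        obtain ⟨σ, -, rfl⟩ := mem_image.mp ht
        exact le_csSup (bddAbove_mfPressure_image_Icc _)
          (Set.mem_image_of_mem _ (abs_le.mp (abs_mag_le_one N σ)))
    _ ≤ (N + 1) * exp (N * sSup (mfPressure (β * J) '' Set.Icc (-1) 1)) := by
        rw [sum_const, nsmul_eq_mul]
        gcongr
        exact_mod_cast card_image_mag_le N

lemma log_Zcw_div_le {N : ℕ} (hN : 0 < N) (J β : ℝ) :
    log (Zcw N J β) / N ≤ sSup (mfPressure (β * J) '' Set.Icc (-1) 1) + log (N + 1) / N := by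
  have hN' : (0 : ℝ) < N := by exact_mod_cast hN
  have hZ : 0 < Zcw N J β := sum_pos (fun _ _ => exp_pos _) univ_nonempty
  have hlog := log_le_log hZ (Zcw_le_add_one_mul_exp_sSup N J β)
  rw [log_mul (by positivity) (exp_pos _).ne', log_exp] at hlog
  rw [div_le_iff₀ hN', add_mul, div_mul_cancel₀ _ hN'.ne']
  linarith [mul_comm (sSup (mfPressure (β * J) '' Set.Icc (-1) 1)) (N : ℝ)]

lemma tendsto_log_natCast_add_one_div :
    Tendsto (fun N : ℕ => log (N + 1) / N) atTop (nhds 0) := by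
  have h := (tendsto_pow_log_div_mul_add_atTop 1 (-1) 1 one_ne_zero).comp
    (tendsto_atTop_add_const_right atTop 1 tendsto_natCast_atTop_atTop)
  exact h.congr fun N => by simp

/-- For every `β > 0` and `J > 0`, the thermodynamic limit of the Curie–Weiss pressure
exists and equals `sup_{m̃ ∈ [-1,1]} { ln 2 + ln cosh(βJ m̃) − (βJ/2) m̃² }`. -/
theorem cw_pressure_limit (β J : ℝ) (hβ : 0 < β) (hJ : 0 < J) :
    Tendsto (fun N : ℕ => (1 / (N : ℝ)) * Real.log (Zcw N J β)) atTop
      (nhds (sSup ((fun mt : ℝ =>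
        Real.log 2 + Real.log (Real.cosh (β * J * mt)) - β * J / 2 * mt ^ 2) ''
          Set.Icc (-1 : ℝ) 1))) := by
  have hβJ : 0 ≤ β * J := (mul_pos hβ hJ).le
  have hupper := tendsto_log_natCast_add_one_div.const_add
    (sSup (mfPressure (β * J) '' Set.Icc (-1) 1))
  rw [add_zero] at hupper
  simp only [one_div_mul_eq_div]
  refine tendsto_of_tendsto_of_tendsto_of_le_of_le' tendsto_const_nhds hupper ?_ ?_
  · filter_upwards [eventually_gt_atTop 0] with N hN using sSup_mfPressure_le_log_Zcw_div hβJ hN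
  · filter_upwards [eventually_gt_atTop 0] with N hN using log_Zcw_div_le hN J β
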